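/- arXiv:2503.06596 — 3 statements merged into one kernel-verified Lean document; each statement's English description precedes it below -/
import Mathlib

section
/- Let N ≥ 1 be a natural number and let Y_1, …, Y_N be independent real-valued random variables on a probability space, each distributed according to the exponential distribution with rate 1 (the distribution of the squared modulus of a standard circularly-symmetric complex Gaussian). Define M = max(√Y_1, …, √Y_N). Then E[M] = N · Σ_{n=0}^{N−1} C(N−1, n) · (−1)^n · (n+1)^{−3/2} · (√π)/2. -/
/-!
By the layer-cake formula, `E[M] = ∫₀^∞ P(M > t) dt`. Independence gives
`P(M ≤ t) = P(Y ≤ t²)^N = (1 - e^{-t²})^N`; expanding `1 - (1 - e^{-t²})^N` binomially turns the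
integral into a signed sum of half-line Gaussian integrals `∫₀^∞ e^{-(n+1)t²} dt = √(π/(n+1))/2`,
and `C(N, n+1) (n+1) = N C(N-1, n)` puts the sum in the stated form.
-/

open MeasureTheory ProbabilityTheory Real Set

lemma Real.lt_iSup_sqrt_iff {ι : Type*} [Finite ι] {y : ι → ℝ} {t : ℝ} (ht : 0 ≤ t) :
    t < ⨆ i, √(y i) ↔ ∃ i, t ^ 2 < y i := by
  rcases isEmpty_or_nonempty ι with hι | hι
  · simp [Real.iSup_of_isEmpty, ht.not_gt]
  · simp only [lt_ciSup_iff (Set.finite_range _).bddAbove, Real.lt_sqrt ht]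

namespace MeasureTheory

variable {α : Type*} [MeasurableSpace α] {μ : Measure α}

theorem integral_eq_integral_meas_lt_of_integrableOn [IsFiniteMeasure μ] {f : α → ℝ}
    (hf : AEMeasurable f μ) (hf_nn : 0 ≤ᵐ[μ] f)
    (hint : IntegrableOn (fun t ↦ μ.real {a | t < f a}) (Ioi 0)) :
    ∫ a, f a ∂μ = ∫ t in Ioi 0, μ.real {a | t < f a} := by
  rw [integral_eq_lintegral_of_nonneg_ae hf_nn hf.aestronglyMeasurable,
    lintegral_eq_lintegral_meas_lt μ hf_nn hf,
    integral_eq_lintegral_of_nonneg_ae (ae_of_all _ fun _ ↦ measureReal_nonneg)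
      hint.aestronglyMeasurable]
  congr 1
  refine setLIntegral_congr_fun measurableSet_Ioi fun t _ ↦ ?_
  rw [ofReal_measureReal]

end MeasureTheory

namespace ProbabilityTheory

variable {Ω ι : Type*} [MeasurableSpace Ω] {μ : Measure Ω}

lemma iIndepFun.measureReal_forall_le [Fintype ι] {X : ι → Ω → ℝ} (h : iIndepFun X μ)
    (s : ℝ) : μ.real {ω | ∀ i, X i ω ≤ s} = ∏ i, μ.real (X i ⁻¹' Iic s) := by
  have := h.measure_inter_preimage_eq_mul Finset.univ (fun _ _ ↦ measurableSet_Iic (a := s))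
  simp only [Finset.mem_univ, iInter_true] at this
  have hset : {ω | ∀ i, X i ω ≤ s} = ⋂ i, X i ⁻¹' Iic s := by ext; simp
  rw [measureReal_def, hset, this, ENNReal.toReal_prod]
  rfl

lemma measureReal_preimage_Iic_of_map_eq_expMeasure {Y : Ω → ℝ} (hY : Measurable Y)
    {r : ℝ} (hr : 0 < r) (hdist : μ.map Y = expMeasure r) {s : ℝ} (hs : 0 ≤ s) :
    μ.real (Y ⁻¹' Iic s) = 1 - exp (-(r * s)) := by
  have := isProbabilityMeasure_expMeasure hr
  rw [← map_measureReal_apply hY measurableSet_Iic, hdist, ← cdf_eq_real,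
    cdf_expMeasure_eq hr, if_pos hs]

lemma measureReal_lt_iSup_sqrt_of_iIndepFun_expMeasure [Fintype ι] [IsProbabilityMeasure μ]
    {Y : ι → Ω → ℝ} (hmeas : ∀ i, Measurable (Y i)) (hindep : iIndepFun Y μ) {r : ℝ}
    (hr : 0 < r) (hdist : ∀ i, μ.map (Y i) = expMeasure r) {t : ℝ} (ht : 0 ≤ t) :
    μ.real {ω | t < ⨆ i, √(Y i ω)} = 1 - (1 - exp (-(r * t ^ 2))) ^ Fintype.card ι := by
  have hset : {ω | t < ⨆ i, √(Y i ω)} = {ω | ∀ i, Y i ω ≤ t ^ 2}ᶜ := by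
    ext ω
    simp [lt_iSup_sqrt_iff ht]
  have hmeas_set : MeasurableSet {ω | ∀ i, Y i ω ≤ t ^ 2} := by measurability
  rw [hset, probReal_compl_eq_one_sub hmeas_set, hindep.measureReal_forall_le]
  simp only [measureReal_preimage_Iic_of_map_eq_expMeasure (hmeas _) hr (hdist _) (sq_nonneg t),
    Finset.prod_const, Finset.card_univ]

end ProbabilityTheory

lemma one_sub_one_sub_pow {R : Type*} [CommRing R] (x : R) (N : ℕ) :
    1 - (1 - x) ^ N = ∑ n ∈ Finset.range N, (N.choose (n + 1) : R) * (-1) ^ n * x ^ (n + 1) := by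
  have hbinom : (1 - x) ^ N = ∑ k ∈ Finset.range (N + 1), (-x) ^ k * (N.choose k : R) := by
    rw [sub_eq_neg_add, add_pow]
    simp
  rw [hbinom, Finset.sum_range_succ', pow_zero, Nat.choose_zero_right, Nat.cast_one, one_mul,
    sub_add_cancel_right, ← Finset.sum_neg_distrib]
  refine Finset.sum_congr rfl fun n _ ↦ ?_
  rw [neg_pow x]
  ring

lemma one_sub_one_sub_exp_neg_sq_pow (N : ℕ) (t : ℝ) :
    1 - (1 - exp (-t ^ 2)) ^ N =
      ∑ n ∈ Finset.range N, (N.choose (n + 1) : ℝ) * (-1) ^ n * exp (-((n : ℝ) + 1) * t ^ 2) := by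
  rw [one_sub_one_sub_pow]
  refine Finset.sum_congr rfl fun n _ ↦ ?_
  rw [← exp_nat_mul]
  push_cast
  ring_nf

lemma integrableOn_one_sub_one_sub_exp_neg_sq_pow (N : ℕ) :
    IntegrableOn (fun t ↦ 1 - (1 - exp (-t ^ 2)) ^ N) (Ioi 0) := by
  simp_rw [one_sub_one_sub_exp_neg_sq_pow]
  exact integrable_finsetSum _ fun n _ ↦
    ((integrable_exp_neg_mul_sq (by positivity)).integrableOn).const_mul _

lemma integral_Ioi_one_sub_one_sub_exp_neg_sq_pow (N : ℕ) :
    ∫ t in Ioi 0, (1 - (1 - exp (-t ^ 2)) ^ N) =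
      ∑ n ∈ Finset.range N, (N.choose (n + 1) : ℝ) * (-1) ^ n * (√(π / ((n : ℝ) + 1)) / 2) := by
  simp_rw [one_sub_one_sub_exp_neg_sq_pow]
  rw [integral_finsetSum _ fun n _ ↦
    ((integrable_exp_neg_mul_sq (by positivity)).integrableOn).const_mul _]
  simp_rw [integral_const_mul, integral_gaussian_Ioi]

lemma choose_succ_mul_sqrt_pi_div_eq (N n : ℕ) :
    (N.choose (n + 1) : ℝ) * √(π / ((n : ℝ) + 1)) =
      N * (N - 1).choose n * ((n : ℝ) + 1) ^ (-(3 / 2 : ℝ)) * √π := by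
  have hn : (0 : ℝ) < n + 1 := by positivity
  have hchoose : (N : ℝ) * (N - 1).choose n = N.choose (n + 1) * ((n : ℝ) + 1) := by
    rcases N with _ | N
    · simp
    · exact_mod_cast Nat.add_one_mul_choose_eq N n
  have hrpow : ((n : ℝ) + 1) * ((n : ℝ) + 1) ^ (-(3 / 2 : ℝ)) = (√((n : ℝ) + 1))⁻¹ := by
    rw [sqrt_eq_rpow, ← rpow_neg hn.le, ← rpow_one_add' hn.le (by norm_num)]
    norm_num
  rw [hchoose, mul_assoc _ _ (_ ^ _), hrpow, sqrt_div' _ hn.le]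
  ring

theorem expected_max_modulus_general {Ω : Type*} [MeasurableSpace Ω] (μ : Measure Ω)
    [IsProbabilityMeasure μ] (N : ℕ) (Y : Fin N → Ω → ℝ)
    (hmeas : ∀ i, Measurable (Y i))
    (hindep : iIndepFun Y μ)
    (hdist : ∀ i, Measure.map (Y i) μ = expMeasure 1) :
    ∫ ω, (⨆ i, Real.sqrt (Y i ω)) ∂μ =
      N * ∑ n ∈ Finset.range N, ((N - 1).choose n : ℝ) * (-1) ^ n *
        ((n : ℝ) + 1) ^ (-(3 / 2 : ℝ)) * (Real.sqrt π / 2) := by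
  have htail : ∀ t ∈ Ioi (0 : ℝ),
      μ.real {ω | t < ⨆ i, √(Y i ω)} = 1 - (1 - exp (-t ^ 2)) ^ N := fun t ht ↦ by
    simpa using measureReal_lt_iSup_sqrt_of_iIndepFun_expMeasure hmeas hindep one_pos hdist
      (mem_Ioi.1 ht).le
  have hM : Measurable fun ω ↦ ⨆ i, √(Y i ω) := by measurability
  rw [integral_eq_integral_meas_lt_of_integrableOn hM.aemeasurable
      (ae_of_all _ fun ω ↦ Real.iSup_nonneg fun i ↦ sqrt_nonneg _)
      ((integrableOn_one_sub_one_sub_exp_neg_sq_pow N).congr_fun (fun t ht ↦ (htail t ht).symm)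
        measurableSet_Ioi),
    setIntegral_congr_fun measurableSet_Ioi htail, integral_Ioi_one_sub_one_sub_exp_neg_sq_pow,
    Finset.mul_sum]
  refine Finset.sum_congr rfl fun n _ ↦ ?_
  linear_combination (-1) ^ n / 2 * choose_succ_mul_sqrt_pi_div_eq N n

/-- Part 1 of Lemma 1: expected maximum modulus of `N` i.i.d. standard circularly
symmetric complex Gaussians, modeled via `N` i.i.d. rate-1 exponential variables
`Y i` (the squared moduli) and `M = max_i √(Y i)`. -/
theorem expected_max_modulus {Ω : Type*} [MeasurableSpace Ω] (μ : Measure Ω)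
    [IsProbabilityMeasure μ] (N : ℕ) (hN : 1 ≤ N) (Y : Fin N → Ω → ℝ)
    (hmeas : ∀ i, Measurable (Y i))
    (hindep : iIndepFun Y μ)
    (hdist : ∀ i, Measure.map (Y i) μ = expMeasure 1) :
    ∫ ω, (⨆ i, Real.sqrt (Y i ω)) ∂μ =
      N * ∑ n ∈ Finset.range N, ((N - 1).choose n : ℝ) * (-1) ^ n *
        ((n : ℝ) + 1) ^ (-(3 / 2 : ℝ)) * (Real.sqrt π / 2) :=
  expected_max_modulus_general μ N Y hmeas hindep hdist
end

section
/- For every natural number N ≥ 1, the improper Riemann/Lebesgue integral ∫_0^∞ (1 − (1 − e^{−t})^N) dt equals N · Σ_{n=0}^{N−1} C(N−1, n) · (−1)^n / (n+1)². -/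
/-! Expanding `(1 - e^{-t})^N` binomially makes the integrand a finite combination of the
`e^{-(n+1)t}`, each of which integrates to `1/(n+1)`; absorbing one factor `n+1` via
`N·C(N-1, n) = (n+1)·C(N, n+1)` gives the stated sum. -/

open MeasureTheory Real Finset

theorem one_sub_one_sub_pow_eq_sum {R : Type*} [CommRing R] (x : R) (N : ℕ) :
    1 - (1 - x) ^ N = ∑ n ∈ range N, (-1) ^ n * N.choose (n + 1) * x ^ (n + 1) := by
  have binomial : (1 - x) ^ N = ∑ m ∈ range (N + 1), (-x) ^ m * N.choose m := by
    simpa [sub_eq_neg_add] using add_pow (-x) 1 N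
  rw [binomial, sum_range_succ']
  simp only [pow_zero, Nat.choose_zero_right, Nat.cast_one, mul_one, sub_add_cancel_right,
    ← sum_neg_distrib]
  exact sum_congr rfl fun n _ => by ring

theorem Nat.mul_choose_sub_one (N n : ℕ) :
    N * (N - 1).choose n = N.choose (n + 1) * (n + 1) := by
  cases N with
  | zero => simp
  | succ N => exact Nat.add_one_mul_choose_eq N n

theorem exp_neg_pow_eq_exp_neg_mul (k : ℕ) (t : ℝ) : exp (-t) ^ k = exp (-k * t) := by
  rw [← exp_nat_mul]
  ring_nf

theorem integrableOn_exp_neg_pow_Ioi {k : ℕ} (hk : 0 < k) (c : ℝ) :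
    IntegrableOn (fun t => exp (-t) ^ k) (Set.Ioi c) := by
  simp_rw [exp_neg_pow_eq_exp_neg_mul]
  exact integrableOn_exp_mul_Ioi (by simpa) c

theorem integral_exp_neg_pow_Ioi_zero {k : ℕ} (hk : 0 < k) :
    ∫ t in Set.Ioi (0 : ℝ), exp (-t) ^ k = 1 / k := by
  simp_rw [exp_neg_pow_eq_exp_neg_mul]
  rw [integral_exp_mul_Ioi (by simpa) 0]
  field_simp
  simp

theorem layer_cake_max_exponential_general (N : ℕ) :
    ∫ t in Set.Ioi (0 : ℝ), (1 - (1 - Real.exp (-t)) ^ N) =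
      N * ∑ n ∈ Finset.range N, ((N - 1).choose n : ℝ) * (-1) ^ n / ((n : ℝ) + 1) ^ 2 := by
  simp_rw [one_sub_one_sub_pow_eq_sum]
  rw [integral_finsetSum _ fun n _ => (integrableOn_exp_neg_pow_Ioi n.succ_pos 0).const_mul _]
  simp_rw [integral_const_mul, integral_exp_neg_pow_Ioi_zero (Nat.succ_pos _), mul_sum]
  refine sum_congr rfl fun n _ => ?_
  have choose_identity : (N : ℝ) * (N - 1).choose n = N.choose (n + 1) * (n + 1) :=
    mod_cast Nat.mul_choose_sub_one N n
  field_simp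
  push_cast
  linear_combination -((n : ℝ) + 1) * choose_identity

/-- Layer-cake integral identity underlying part 2 of Lemma 1. -/
theorem layer_cake_max_exponential (N : ℕ) (hN : 1 ≤ N) :
    ∫ t in Set.Ioi (0 : ℝ), (1 - (1 - Real.exp (-t)) ^ N) =
      N * ∑ n ∈ Finset.range N, ((N - 1).choose n : ℝ) * (-1) ^ n / ((n : ℝ) + 1) ^ 2 :=
  layer_cake_max_exponential_general N
end

section
/- Define f(L) = L·Σ_{n=0}^{L−1} C(L−1, n)·(−1)^n·(n+1)^{−3/2}·(√π)/2 and g(L) = L·Σ_{n=0}^{L−1} C(L−1, n)·(−1)^n/(n+1)² for natural numbers L ≥ 1, and Ψ(L) = f(L)²/g(L). Let K ≥ 1, and for each k ∈ {1, …, K} let P, σ², N₁, N₂, β₁_k, β₂_k be positive reals, let L_{k1}, L_{k2} ≥ 1 be natural numbers, and assume g(L_{k1}) > 0. Then (1/K)·Σ_{k=1}^K (L_{k2}/N₂)·log₂( 1 + (π/2)·( (N₁N₂/√(L_{k1}·L_{k2}))·f(L_{k1})²·√(β₁_k·β₂_k) ) / ( σ²/P + (N₁²/L_{k1})·g(L_{k1})²·β₁_k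 + (N₂²/L_{k2})·β₂_k ) ) ≤ (1/K)·Σ_{k=1}^K (L_{k2}/N₂)·log₂( 1 + Ψ(L_{k1})·(π/4) ). -/
open Real

/-- The constant `f(L)` from Lemma 1 (expected maximum modulus). -/
noncomputable def fConst (L : ℕ) : ℝ :=
  L * ∑ n ∈ Finset.range L, ((L - 1).choose n : ℝ) * (-1) ^ n *
    ((n : ℝ) + 1) ^ (-(3 / 2 : ℝ)) * (Real.sqrt π / 2)

/-- The constant `g(L)` from Lemma 1 (expected maximum squared modulus). -/
noncomputable def gConst (L : ℕ) : ℝ :=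
  L * ∑ n ∈ Finset.range L, ((L - 1).choose n : ℝ) * (-1) ^ n / ((n : ℝ) + 1) ^ 2

/-- `Ψ(L) = f(L)² / g(L)`. -/
noncomputable def psiConst (L : ℕ) : ℝ := (fConst L) ^ 2 / gConst L

/-!
Writing `a = (N₁/√L₁)·g·√β₁` and `b = (N₂/√L₂)·√β₂`, the numerator of each SNR term is
`Ψ·a·b` (since `f² = Ψ·g`) and its denominator is `σ²/P + a² + b²`. By AM–GM,
`a·b ≤ (a² + b²)/2`, so the SNR term is at most `(π/2)·Ψ/2 = Ψ·π/4`, and the bound follows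
termwise from monotonicity of `log₂`.
-/

lemma mul_div_add_sq_add_sq_le_half {s : ℝ} (hs : 0 ≤ s) (a b : ℝ) :
    a * b / (s + (a ^ 2 + b ^ 2)) ≤ 1 / 2 := by
  rcases (by positivity : 0 ≤ s + (a ^ 2 + b ^ 2)).eq_or_lt with hden | hden
  · rw [← hden, div_zero]
    norm_num
  · rw [div_le_iff₀ hden]
    nlinarith [two_mul_le_add_sq a b]

lemma div_sqrt_mul_sqrt_sq {x y : ℝ} (hx : 0 ≤ x) (hy : 0 ≤ y) (N : ℝ) :
    (N / √x * √y) ^ 2 = N ^ 2 / x * y := by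
  rw [mul_pow, div_pow, sq_sqrt hx, sq_sqrt hy]

lemma cascaded_snr_le_half {ψ g s N₁ N₂ L₁ L₂ β₁ β₂ : ℝ} (hψ : 0 ≤ ψ) (hs : 0 ≤ s)
    (hL₁ : 0 ≤ L₁) (hL₂ : 0 ≤ L₂) (hβ₁ : 0 ≤ β₁) (hβ₂ : 0 ≤ β₂) :
    N₁ * N₂ / √(L₁ * L₂) * (ψ * g) * √(β₁ * β₂) /
        (s + (N₁ ^ 2 / L₁ * g ^ 2 * β₁ + N₂ ^ 2 / L₂ * β₂)) ≤ ψ / 2 := by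
  set a := g * (N₁ / √L₁ * √β₁)
  set b := N₂ / √L₂ * √β₂
  have hnum : N₁ * N₂ / √(L₁ * L₂) * (ψ * g) * √(β₁ * β₂) = ψ * (a * b) := by
    rw [sqrt_mul hL₁, sqrt_mul hβ₁]
    ring
  have hden : N₁ ^ 2 / L₁ * g ^ 2 * β₁ + N₂ ^ 2 / L₂ * β₂ = a ^ 2 + b ^ 2 := by
    rw [mul_pow, div_sqrt_mul_sqrt_sq hL₁ hβ₁, div_sqrt_mul_sqrt_sq hL₂ hβ₂]
    ring
  rw [hnum, hden]
  calc ψ * (a * b) / (s + (a ^ 2 + b ^ 2)) = ψ * (a * b / (s + (a ^ 2 + b ^ 2))) :=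
        mul_div_assoc _ _ _
    _ ≤ ψ * (1 / 2) := mul_le_mul_of_nonneg_left (mul_div_add_sq_add_sq_le_half hs a b) hψ
    _ = ψ / 2 := by ring

lemma psiConst_nonneg {L : ℕ} (hg : 0 ≤ gConst L) : 0 ≤ psiConst L :=
  div_nonneg (sq_nonneg _) hg

lemma fConst_sq_eq_psiConst_mul {L : ℕ} (hg : gConst L ≠ 0) :
    fConst L ^ 2 = psiConst L * gConst L :=
  (div_mul_cancel₀ _ hg).symm

theorem cooperation_gain_bound_general
    (K : ℕ) (P σ2 N1 N2 : ℝ)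
    (hP : 0 < P) (hσ : 0 < σ2) (hN1 : 0 < N1) (hN2 : 0 < N2)
    (β1 β2 : Fin K → ℝ) (hβ1 : ∀ k, 0 < β1 k) (hβ2 : ∀ k, 0 < β2 k)
    (L1 L2 : Fin K → ℕ)
    (hg : ∀ k, 0 < gConst (L1 k)) :
    (1 / (K : ℝ)) * ∑ k, ((L2 k : ℝ) / N2) * Real.logb 2 (1 + (π / 2) *
        ((N1 * N2 / Real.sqrt ((L1 k : ℝ) * (L2 k : ℝ))) * (fConst (L1 k)) ^ 2 *
            Real.sqrt (β1 k * β2 k) /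
          (σ2 / P + ((N1 ^ 2 / (L1 k : ℝ)) * (gConst (L1 k)) ^ 2 * β1 k +
            (N2 ^ 2 / (L2 k : ℝ)) * β2 k)))) ≤
      (1 / (K : ℝ)) * ∑ k, ((L2 k : ℝ) / N2) * Real.logb 2 (1 + psiConst (L1 k) * (π / 4)) := by
  refine mul_le_mul_of_nonneg_left (Finset.sum_le_sum fun k _ => ?_) (by positivity)
  have hsnr := cascaded_snr_le_half (g := gConst (L1 k)) (N₁ := N1) (N₂ := N2)
    (psiConst_nonneg (hg k).le) (div_pos hσ hP).le (Nat.cast_nonneg (L1 k))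
    (Nat.cast_nonneg (L2 k)) (hβ1 k).le (hβ2 k).le
  rw [← fConst_sq_eq_psiConst_mul (hg k).ne'] at hsnr
  have hβ1k := hβ1 k
  have hβ2k := hβ2 k
  refine mul_le_mul_of_nonneg_left (logb_le_logb_of_le one_lt_two (by positivity) ?_)
    (by positivity)
  nlinarith [pi_pos]

/-- Theorem 2, part 2 (equation (29)): the maximum gain in the ergodic sum-SE of
MO-X obtained by cooperation over no cooperation is bounded by
`(1/K)·Σ_k (L_{k2}/N₂)·log₂(1 + Ψ(L_{k1})·π/4)`. -/
theorem cooperation_gain_bound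
    (K : ℕ) (hK : 1 ≤ K) (P σ2 N1 N2 : ℝ)
    (hP : 0 < P) (hσ : 0 < σ2) (hN1 : 0 < N1) (hN2 : 0 < N2)
    (β1 β2 : Fin K → ℝ) (hβ1 : ∀ k, 0 < β1 k) (hβ2 : ∀ k, 0 < β2 k)
    (L1 L2 : Fin K → ℕ) (hL1 : ∀ k, 1 ≤ L1 k) (hL2 : ∀ k, 1 ≤ L2 k)
    (hg : ∀ k, 0 < gConst (L1 k)) :
    (1 / (K : ℝ)) * ∑ k, ((L2 k : ℝ) / N2) * Real.logb 2 (1 + (π / 2) *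
        ((N1 * N2 / Real.sqrt ((L1 k : ℝ) * (L2 k : ℝ))) * (fConst (L1 k)) ^ 2 *
            Real.sqrt (β1 k * β2 k) /
          (σ2 / P + ((N1 ^ 2 / (L1 k : ℝ)) * (gConst (L1 k)) ^ 2 * β1 k +
            (N2 ^ 2 / (L2 k : ℝ)) * β2 k)))) ≤
      (1 / (K : ℝ)) * ∑ k, ((L2 k : ℝ) / N2) * Real.logb 2 (1 + psiConst (L1 k) * (π / 4)) :=
  cooperation_gain_bound_general K P σ2 N1 N2 hP hσ hN1 hN2 β1 β2 hβ1 hβ2 L1 L2 hg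
end
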